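/- arXiv:1304.5438 — 2 statements merged into one kernel-verified Lean document; each statement's English description precedes it below -/
import Mathlib

section
/- Let (G,v₀,W) be a Banach–Mazur game on a finite graph and let P be a reasonable probability measure on Paths(G,v₀). If f is a bounded strategy for Player 0, then the set of plays consistent with f has P-measure 1. Consequently, if Player 0 has a bounded winning strategy for (G,v₀,W), then P(W) = 1. -/
open MeasureTheory
open scoped ENNReal NNReal

namespace BMGame

variable {V : Type*}

/-- The prefix of length `n` of the infinite sequence `ρ`. -/
def pref (ρ : ℕ → V) (n : ℕ) : List V := (List.range n).map ρ

/-- `ρ` is an infinite path of the graph `E` starting at `v₀`. -/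
def IsPlay (E : V → V → Prop) (v₀ : V) (ρ : ℕ → V) : Prop :=
  ρ 0 = v₀ ∧ ∀ n, E (ρ n) (ρ (n + 1))

/-- `π` is a nonempty finite path of the graph `E` starting at `v₀` (a position of the game). -/
def IsPos (E : V → V → Prop) (v₀ : V) (π : List V) : Prop :=
  π.head? = some v₀ ∧ π.Chain' E

/-- A strategy for player 0 assigns to each position the (nonempty) block of vertices
appended by player 0's move; `(π ++ f π).Chain' E` says that this block is a path
starting at the last vertex of `π`. -/
def IsStrategy (E : V → V → Prop) (v₀ : V) (f : List V → List V) : Prop :=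
  ∀ π, IsPos E v₀ π → f π ≠ [] ∧ (π ++ f π).Chain' E

/-- The play `ρ` is consistent with the strategy `f`: there are cut points
`c 0, c 1, …` (the lengths of the prefixes built after each move of player 1) such that
after each such prefix player 0 plays according to `f`, and player 1 then appends a
nonempty block. -/
def ConsGen (f : List V → List V) (ρ : ℕ → V) : Prop :=
  ∃ c : ℕ → ℕ, 1 ≤ c 0 ∧ ∀ i,
    pref ρ (c i + (f (pref ρ (c i))).length) = pref ρ (c i) ++ f (pref ρ (c i)) ∧
    c i + (f (pref ρ (c i))).length < c (i + 1)

/-- `f` is a winning strategy for player 0 in the Banach–Mazur game `(E, v₀, W)`. -/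
def WinningStrategy (E : V → V → Prop) (v₀ : V) (W : Set (ℕ → V))
    (f : List V → List V) : Prop :=
  IsStrategy E v₀ f ∧ ∀ ρ, IsPlay E v₀ ρ → ConsGen f ρ → ρ ∈ W

/-- The strategy `f` is `b`-bounded: each of its moves has length at most `b`. -/
def BoundedBy (E : V → V → Prop) (v₀ : V) (b : ℕ) (f : List V → List V) : Prop :=
  ∀ π, IsPos E v₀ π → (f π).length ≤ b

/-- A positional strategy assigns to each vertex the nonempty block appended. -/
def IsPositional (E : V → V → Prop) (f : V → List V) : Prop :=
  ∀ v, f v ≠ [] ∧ (v :: f v).Chain' E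

/-- Consistency with a positional strategy: after each prefix chosen by player 1,
player 0 plays `f` of the current (last) vertex. -/
def ConsPositional (f : V → List V) (ρ : ℕ → V) : Prop :=
  ∃ c : ℕ → ℕ, 1 ≤ c 0 ∧ ∀ i,
    pref ρ (c i + (f (ρ (c i - 1))).length) = pref ρ (c i) ++ f (ρ (c i - 1)) ∧
    c i + (f (ρ (c i - 1))).length < c (i + 1)

def PositionalWinning (E : V → V → Prop) (v₀ : V) (W : Set (ℕ → V)) (f : V → List V) : Prop :=
  IsPositional E f ∧ ∀ ρ, IsPlay E v₀ ρ → ConsPositional f ρ → ρ ∈ W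

/-- Structural requirement shared by move-counting and length-counting strategies:
for `n ≥ 1`, `h v n` is a nonempty block forming a path from `v`. -/
def IsCountingStrategy (E : V → V → Prop) (h : V → ℕ → List V) : Prop :=
  ∀ v n, 1 ≤ n → h v n ≠ [] ∧ (v :: h v n).Chain' E

/-- Consistency with a move-counting strategy: at its `i`-th move (`i ≥ 1`) player 0 plays
`h (current vertex) i`. -/
def ConsMoveCounting (h : V → ℕ → List V) (ρ : ℕ → V) : Prop :=
  ∃ c : ℕ → ℕ, 1 ≤ c 0 ∧ ∀ i,
    pref ρ (c i + (h (ρ (c i - 1)) (i + 1)).length) = pref ρ (c i) ++ h (ρ (c i - 1)) (i + 1) ∧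
    c i + (h (ρ (c i - 1)) (i + 1)).length < c (i + 1)

def MoveCountingWinning (E : V → V → Prop) (v₀ : V) (W : Set (ℕ → V))
    (h : V → ℕ → List V) : Prop :=
  IsCountingStrategy E h ∧ ∀ ρ, IsPlay E v₀ ρ → ConsMoveCounting h ρ → ρ ∈ W

/-- Consistency with a length-counting strategy: after a prefix of length `c i`
player 0 plays `h (current vertex) (c i)`. -/
def ConsLengthCounting (h : V → ℕ → List V) (ρ : ℕ → V) : Prop :=
  ∃ c : ℕ → ℕ, 1 ≤ c 0 ∧ ∀ i,
    pref ρ (c i + (h (ρ (c i - 1)) (c i)).length) = pref ρ (c i) ++ h (ρ (c i - 1)) (c i) ∧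
    c i + (h (ρ (c i - 1)) (c i)).length < c (i + 1)

def LengthCountingWinning (E : V → V → Prop) (v₀ : V) (W : Set (ℕ → V))
    (h : V → ℕ → List V) : Prop :=
  IsCountingStrategy E h ∧ ∀ ρ, IsPlay E v₀ ρ → ConsLengthCounting h ρ → ρ ∈ W

/-- The segment `ρ a, ρ (a+1), …, ρ (b-1)` of an infinite sequence. -/
def seg (ρ : ℕ → V) (a b : ℕ) : List V := (List.range (b - a)).map fun j => ρ (a + j)

/-- A last-move strategy is defined on all nonempty finite paths of the graph. -/
def IsLastMove (E : V → V → Prop) (g : List V → List V) : Prop :=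
  ∀ π, π ≠ [] → π.Chain' E → g π ≠ [] ∧ (π ++ g π).Chain' E

/-- Consistency with the last-move strategy `g`: the play decomposes as
`π₁ g(π₁) π₂ g(π₂) ⋯` where the `πᵢ` are the (nonempty) moves of player 1. -/
def ConsLastMove (g : List V → List V) (ρ : ℕ → V) : Prop :=
  ∃ s e : ℕ → ℕ, s 0 = 0 ∧ (∀ i, s i < e i) ∧ ∀ i,
    seg ρ (e i) (e i + (g (seg ρ (s i) (e i))).length) = g (seg ρ (s i) (e i)) ∧
    s (i + 1) = e i + (g (seg ρ (s i) (e i))).length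

def LastMoveWinning (E : V → V → Prop) (v₀ : V) (W : Set (ℕ → V)) (g : List V → List V) : Prop :=
  IsLastMove E g ∧ ∀ ρ, IsPlay E v₀ ρ → ConsLastMove g ρ → ρ ∈ W

/-- The cylinder generated by the finite word `π`. -/
def Cyl (π : List V) : Set (ℕ → V) := {ρ | pref ρ π.length = π}

/-- One-step transition probabilities obtained from the weights `w`. -/
noncomputable def transP [Fintype V] (E : V → V → Prop) (w : V → V → ℝ≥0) (u v : V) : ℝ≥0∞ := by
  classical
  exact if E u v then
    (w u v : ℝ≥0∞) / ∑ x ∈ Finset.univ.filter (fun x => E u x), (w u x : ℝ≥0∞)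
  else 0

/-- The probability of the cylinder generated by a finite word: the product of the
one-step transition probabilities along it. -/
noncomputable def pathP [Fintype V] (E : V → V → Prop) (w : V → V → ℝ≥0) (π : List V) : ℝ≥0∞ :=
  ((π.zip π.tail).map fun q => transP E w q.1 q.2).prod

/-- `P` is the reasonable probability measure associated with the weights `w`. -/
def IsReasonable [Fintype V] [MeasurableSpace (ℕ → V)] (E : V → V → Prop) (v₀ : V)
    (w : V → V → ℝ≥0) (P : Measure (ℕ → V)) : Prop :=
  IsProbabilityMeasure P ∧ ∀ π : List V, π.head? = some v₀ → P (Cyl π) = pathP E w π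

/-- `Ps` is a legal move of player 0 in the generalised game `G_α` at position `π`: a
finite nonempty set of nonempty finite paths from the last vertex of `π` whose union of
cylinders has conditional probability at least `α` given `Cyl π`. -/
def LegalProposal [MeasurableSpace (ℕ → V)] (E : V → V → Prop) (P : Measure (ℕ → V)) (α : ℝ)
    (π : List V) (Ps : Finset (List V)) : Prop :=
  Ps.Nonempty ∧ (∀ τ ∈ Ps, τ ≠ [] ∧ (π ++ τ).Chain' E) ∧
    ENNReal.ofReal α ≤ P (⋃ τ ∈ Ps, Cyl (π ++ τ)) / P (Cyl π)

/-- An α-strategy for player 0. -/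
def IsAlphaStrategy [MeasurableSpace (ℕ → V)] (E : V → V → Prop) (v₀ : V) (P : Measure (ℕ → V))
    (α : ℝ) (f : List V → Finset (List V)) : Prop :=
  ∀ π, IsPos E v₀ π → LegalProposal E P α π (f π)

/-- Consistency with an α-strategy: at each stage, player 1 picks some element of the
set proposed by player 0 and appends a nonempty block after it. -/
def ConsAlpha (f : List V → Finset (List V)) (ρ : ℕ → V) : Prop :=
  ∃ c : ℕ → ℕ, 1 ≤ c 0 ∧ ∀ i, ∃ τ ∈ f (pref ρ (c i)),
    pref ρ (c i + τ.length) = pref ρ (c i) ++ τ ∧ c i + τ.length < c (i + 1)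

def AlphaWinning [MeasurableSpace (ℕ → V)] (E : V → V → Prop) (v₀ : V) (P : Measure (ℕ → V))
    (α : ℝ) (W : Set (ℕ → V)) (f : List V → Finset (List V)) : Prop :=
  IsAlphaStrategy E v₀ P α f ∧ ∀ ρ, IsPlay E v₀ ρ → ConsAlpha f ρ → ρ ∈ W

/-- A strategy for player 1 in the generalised game `G_α` consists of an initial path and,
for each position together with a legal proposal of player 0, the selected element of the
proposal and the next (nonempty) block played by player 1. -/
def IsP1Strategy [MeasurableSpace (ℕ → V)] (E : V → V → Prop) (v₀ : V) (P : Measure (ℕ → V))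
    (α : ℝ) (init : List V) (g : List V → Finset (List V) → List V × List V) : Prop :=
  IsPos E v₀ init ∧
    ∀ π Ps, IsPos E v₀ π → LegalProposal E P α π Ps →
      (g π Ps).1 ∈ Ps ∧ (g π Ps).2 ≠ [] ∧ (π ++ ((g π Ps).1 ++ (g π Ps).2)).Chain' E

/-- Consistency of a play with player 1's strategy `(init, g)`:
there is a sequence of legal proposals of player 0 generating the play. -/
def ConsP1 [MeasurableSpace (ℕ → V)] (E : V → V → Prop) (P : Measure (ℕ → V)) (α : ℝ)
    (init : List V) (g : List V → Finset (List V) → List V × List V) (ρ : ℕ → V) : Prop :=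
  ∃ (Ps : ℕ → Finset (List V)) (p : ℕ → List V), p 0 = init ∧
    (∀ n, pref ρ (p n).length = p n) ∧
    ∀ n, LegalProposal E P α (p n) (Ps n) ∧
      p (n + 1) = p n ++ ((g (p n) (Ps n)).1 ++ (g (p n) (Ps n)).2)

def P1Winning [MeasurableSpace (ℕ → V)] (E : V → V → Prop) (v₀ : V) (P : Measure (ℕ → V))
    (α : ℝ) (W : Set (ℕ → V)) (init : List V)
    (g : List V → Finset (List V) → List V × List V) : Prop :=
  IsP1Strategy E v₀ P α init g ∧ ∀ ρ, IsPlay E v₀ ρ → ConsP1 E P α init g ρ → ρ ∉ W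

/-- A union of cylinders, i.e. an open subset of the space of sequences. -/
def IsCylOpen (U : Set (ℕ → V)) : Prop :=
  ∃ S : Set (List V), U = ⋃ π ∈ S, Cyl π

/-- `W` is a countable intersection of open subsets of the space `Paths (G, v₀)`. -/
def IsCountableInterOfOpens (E : V → V → Prop) (v₀ : V) (W : Set (ℕ → V)) : Prop :=
  ∃ U : ℕ → Set (ℕ → V), (∀ n, IsCylOpen (U n)) ∧
    W = {ρ | IsPlay E v₀ ρ} ∩ ⋂ n, U n

/-- For every `n`, the concatenation of the blocks `u 0, …, u (n-1)` is a prefix of `ρ`. -/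
def AgreesWithBlocks (ρ : ℕ → V) (u : ℕ → List V) : Prop :=
  ∀ n, pref ρ (((List.range n).map u).flatten).length = ((List.range n).map u).flatten

end BMGame

open BMGame

/-!
Let `q > 0` be the smallest transition probability along an edge. From any position, a move of
length at most `b` is played next with conditional probability at least `q ^ b`, so the
strategy fails to be followed at a cut point `m` with conditional probability at most
`1 - q ^ b`. Whether it is followed at `m` depends only on the first `m + b` vertices, hence along
cut points spaced `b + 1` apart these failures multiply like independent events, and almost
surely the strategy is followed at infinitely many cut points. A play with that property is
consistent with the strategy.
-/

open Filter

namespace BMGame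

variable {V : Type*}

section Cylinders

lemma length_pref (ρ : ℕ → V) (n : ℕ) : (pref ρ n).length = n := by simp [pref]

lemma getElem_pref (ρ : ℕ → V) {n i : ℕ} (h : i < (pref ρ n).length) : (pref ρ n)[i] = ρ i := by
  simp [pref]

lemma pref_congr {ρ ρ' : ℕ → V} {n : ℕ} (h : ∀ i < n, ρ i = ρ' i) : pref ρ n = pref ρ' n :=
  List.map_congr_left fun i hi => h i (List.mem_range.1 hi)

lemma rel_of_isChain_pref {E : V → V → Prop} {ρ : ℕ → V} {m n : ℕ}
    (h : (pref ρ m).IsChain E) (hn : n + 1 < m) : E (ρ n) (ρ (n + 1)) := by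
  have := List.isChain_iff_getElem.1 h n (by simpa [length_pref] using hn)
  rwa [getElem_pref, getElem_pref] at this

lemma mem_Cyl_iff {ρ : ℕ → V} {π : List V} :
    ρ ∈ Cyl π ↔ ∀ i (h : i < π.length), ρ i = π[i] := by
  simp [Cyl, List.ext_getElem_iff, length_pref, getElem_pref]

lemma Cyl_append_subset (π τ : List V) : Cyl (π ++ τ) ⊆ Cyl π := fun ρ hρ =>
  mem_Cyl_iff.2 fun i hi => by
    rw [mem_Cyl_iff.1 hρ i (by simp; omega), List.getElem_append_left hi]

lemma mem_Cyl_ofFn_iff {n : ℕ} {ρ : ℕ → V} {x : Fin n → V} :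
    ρ ∈ Cyl (List.ofFn x) ↔ ∀ i : Fin n, ρ i = x i := by
  simp [mem_Cyl_iff, Fin.forall_iff]

lemma pairwiseDisjoint_Cyl_ofFn {n : ℕ} (S : Set (Fin n → V)) :
    S.PairwiseDisjoint fun x => Cyl (List.ofFn x) := fun _ _ _ _ hxy =>
  Set.disjoint_left.2 fun _ hx hy => hxy <| funext fun i =>
    (mem_Cyl_ofFn_iff.1 hx i).symm.trans (mem_Cyl_ofFn_iff.1 hy i)

lemma measurableSet_Cyl [MeasurableSpace V] [MeasurableSingletonClass V] (π : List V) :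
    MeasurableSet (Cyl π) := by
  have h : Cyl π = ⋂ i, ⋂ (h : i < π.length), (fun ρ : ℕ → V => ρ i) ⁻¹' {π[i]} := by
    ext ρ
    simp [mem_Cyl_iff]
  rw [h]
  exact .iInter fun i => .iInter fun _ => measurable_pi_apply i (measurableSet_singleton _)

end Cylinders

section Weights

variable [Fintype V] {E : V → V → Prop} {w : V → V → ℝ≥0}

lemma transP_pos (hw : ∀ u v, E u v → 0 < w u v) {u v : V} (h : E u v) :
    0 < transP E w u v := by
  classical
  unfold transP
  rw [if_pos h]
  exact ENNReal.div_pos (by simpa using (hw u v h).ne') (ENNReal.sum_ne_top.2 fun _ _ => by simp)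

lemma exists_pos_forall_le_transP (hw : ∀ u v, E u v → 0 < w u v) :
    ∃ q : ℝ≥0∞, 0 < q ∧ q ≤ 1 ∧ ∀ u v, E u v → q ≤ transP E w u v := by
  classical
  refine ⟨min 1 ((Finset.univ.filter fun p : V × V => E p.1 p.2).inf fun p => transP E w p.1 p.2),
    lt_min one_pos ?_, min_le_left _ _,
    fun u v huv => min_le_of_right_le (Finset.inf_le (b := (u, v)) (by simpa using huv))⟩
  exact (Finset.lt_inf_iff ENNReal.zero_lt_top).2 fun p hp => transP_pos hw (by simpa using hp)

lemma pathP_cons_cons (u v : V) (l : List V) :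
    pathP E w (u :: v :: l) = transP E w u v * pathP E w (v :: l) := by
  simp [pathP, List.zip_cons_cons]

lemma pathP_append : ∀ (π : List V) (h : π ≠ []) (τ : List V),
    pathP E w (π ++ τ) = pathP E w π * pathP E w (π.getLast h :: τ)
  | [u], _, τ => by simp [pathP]
  | u :: v :: l, _, τ => by
    rw [List.cons_append, List.cons_append, pathP_cons_cons, ← List.cons_append,
      pathP_append (v :: l) (List.cons_ne_nil _ _), pathP_cons_cons, mul_assoc,
      List.getLast_cons (List.cons_ne_nil _ _)]

lemma pathP_eq_zero_of_not_chain : ∀ {π : List V}, ¬ π.IsChain E → pathP E w π = 0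
  | [], h => absurd List.isChain_nil h
  | [v], h => absurd (List.isChain_singleton v) h
  | u :: v :: l, h => by
    rw [List.isChain_cons_cons, not_and_or] at h
    rw [pathP_cons_cons]
    rcases h with huv | hl
    · simp [transP, huv]
    · rw [pathP_eq_zero_of_not_chain hl, mul_zero]

lemma pow_length_le_pathP {q : ℝ≥0∞} (hq : ∀ u v, E u v → q ≤ transP E w u v) :
    ∀ {u : V} {τ : List V}, (u :: τ).IsChain E → q ^ τ.length ≤ pathP E w (u :: τ)
  | _, [], _ => by simp [pathP]
  | u, v :: l, h => by
    rw [List.isChain_cons_cons] at h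
    rw [pathP_cons_cons, List.length_cons, pow_succ']
    exact mul_le_mul' (hq u v h.1) (pow_length_le_pathP hq h.2)

end Weights

section PrefixDetermined

variable [Fintype V]

lemma exists_finset_eq_biUnion_Cyl {n : ℕ} {A : Set (ℕ → V)}
    (hA : DependsOn (· ∈ A) (Set.Iio n)) :
    ∃ S : Finset (Fin n → V), A = ⋃ x ∈ S, Cyl (List.ofFn x) := by
  classical
  refine ⟨Finset.univ.filter fun x => ∃ ρ ∈ A, ρ ∈ Cyl (List.ofFn x), ?_⟩
  ext ρ
  simp only [Set.mem_iUnion, Finset.mem_filter, Finset.mem_univ, true_and, exists_prop]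
  refine ⟨fun hρ => ⟨fun i => ρ i, ⟨ρ, hρ, mem_Cyl_ofFn_iff.2 fun _ => rfl⟩,
    mem_Cyl_ofFn_iff.2 fun _ => rfl⟩, ?_⟩
  rintro ⟨x, ⟨ρ', hρ', hx'⟩, hx⟩
  have hagree : ∀ i ∈ Set.Iio n, ρ' i = ρ i := fun i hi =>
    (mem_Cyl_ofFn_iff.1 hx' ⟨i, hi⟩).trans (mem_Cyl_ofFn_iff.1 hx ⟨i, hi⟩).symm
  exact (eq_iff_iff.1 (hA hagree)).1 hρ'

variable [MeasurableSpace V] [MeasurableSingletonClass V]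

lemma measure_inter_le_of_forall_Cyl (P : Measure (ℕ → V)) {n : ℕ} {A : Set (ℕ → V)}
    (hA : DependsOn (· ∈ A) (Set.Iio n)) (F : Set (ℕ → V)) {r : ℝ≥0∞}
    (hF : ∀ π : List V, π.length = n → P (Cyl π ∩ F) ≤ r * P (Cyl π)) :
    P (A ∩ F) ≤ r * P A := by
  obtain ⟨S, rfl⟩ := exists_finset_eq_biUnion_Cyl hA
  calc P ((⋃ x ∈ S, Cyl (List.ofFn x)) ∩ F) = P (⋃ x ∈ S, Cyl (List.ofFn x) ∩ F) := by
        rw [Set.iUnion₂_inter]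
    _ ≤ ∑ x ∈ S, P (Cyl (List.ofFn x) ∩ F) := measure_biUnion_finset_le S _
    _ ≤ ∑ x ∈ S, r * P (Cyl (List.ofFn x)) :=
        Finset.sum_le_sum fun x _ => hF _ List.length_ofFn
    _ = r * P (⋃ x ∈ S, Cyl (List.ofFn x)) := by
        rw [measure_biUnion_finset (pairwiseDisjoint_Cyl_ofFn _) fun x _ => measurableSet_Cyl _,
          Finset.mul_sum]

theorem measure_iInter_eq_zero_of_forall_Cyl (P : Measure (ℕ → V)) [IsProbabilityMeasure P]
    {A : ℕ → Set (ℕ → V)} {n : ℕ → ℕ} (hA : ∀ j k, j < k → DependsOn (· ∈ A j) (Set.Iio (n k)))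
    {r : ℝ≥0∞} (hr : r < 1)
    (hF : ∀ k (π : List V), π.length = n k → P (Cyl π ∩ A k) ≤ r * P (Cyl π)) :
    P (⋂ k, A k) = 0 := by
  have hdep : ∀ k, DependsOn (· ∈ ⋂ j < k, A j) (Set.Iio (n k)) := fun k x y hxy => by
    simp only [Set.mem_iInter₂]
    exact eq_iff_iff.2 <| forall₂_congr fun j hj => eq_iff_iff.1 (hA j k hj hxy)
  have hpow : ∀ k, P (⋂ j < k, A j) ≤ r ^ k := by
    intro k
    induction k with
    | zero => simp
    | succ k ih =>
      rw [Set.biInter_lt_succ, pow_succ']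
      exact (measure_inter_le_of_forall_Cyl P (hdep k) _ (hF k)).trans (mul_le_mul' le_rfl ih)
  refine le_antisymm (ge_of_tendsto' (ENNReal.tendsto_pow_atTop_nhds_zero_of_lt_one hr)
    fun k => (measure_mono ?_).trans (hpow k)) zero_le
  exact fun ρ hρ => Set.mem_iInter₂.2 fun j _ => Set.mem_iInter.1 hρ j

end PrefixDetermined

section Strategy

variable {E : V → V → Prop} {v₀ : V} {f : List V → List V}

def FollowsAt (E : V → V → Prop) (v₀ : V) (f : List V → List V) (m : ℕ) : Set (ℕ → V) :=
  {ρ | IsPos E v₀ (pref ρ m) ∧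
    pref ρ (m + (f (pref ρ m)).length) = pref ρ m ++ f (pref ρ m)}

lemma dependsOn_followsAt {b : ℕ} (hb : BoundedBy E v₀ b f) (m : ℕ) :
    DependsOn (· ∈ FollowsAt E v₀ f m) (Set.Iio (m + b)) := by
  have key : ∀ ρ ρ' : ℕ → V, (∀ i < m + b, ρ i = ρ' i) →
      ρ ∈ FollowsAt E v₀ f m → ρ' ∈ FollowsAt E v₀ f m := by
    rintro ρ ρ' h ⟨hpos, hmove⟩
    have hm : pref ρ m = pref ρ' m := pref_congr fun i hi => h i (by omega)
    have hlen := hb _ hpos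
    rw [hm] at hpos hmove hlen
    refine ⟨hpos, ?_⟩
    rw [← hmove, pref_congr fun i hi => (h i (by omega)).symm]
  exact fun ρ ρ' h => propext ⟨key ρ ρ' h, key ρ' ρ fun i hi => (h i hi).symm⟩

lemma isPlay_of_frequently_followsAt {ρ : ℕ → V}
    (h : ∃ᶠ m in atTop, ρ ∈ FollowsAt E v₀ f m) : IsPlay E v₀ ρ := by
  refine ⟨?_, fun n => ?_⟩
  · obtain ⟨m, hm, hpos, -⟩ := frequently_atTop.1 h 1
    cases m with
    | zero => omega
    | succ k => simpa [pref, List.range_succ_eq_map] using hpos.1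
  · obtain ⟨m, hm, hpos, -⟩ := frequently_atTop.1 h (n + 2)
    exact rel_of_isChain_pref hpos.2 (by omega)

lemma consGen_of_frequently_followsAt {ρ : ℕ → V}
    (h : ∃ᶠ m in atTop, ρ ∈ FollowsAt E v₀ f m) : ConsGen f ρ := by
  choose g hg hfollow using frequently_atTop.1 h
  let c : ℕ → ℕ := fun i => Nat.rec (g 1) (fun _ m => g (m + (f (pref ρ m)).length + 1)) i
  refine ⟨c, hg 1, fun i => ⟨?_, hg _⟩⟩
  cases i with
  | zero => exact (hfollow 1).2
  | succ i => exact (hfollow _).2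

end Strategy

section Reasonable

variable [Fintype V] [MeasurableSpace V]
  {E : V → V → Prop} {v₀ : V} {w : V → V → ℝ≥0} {P : Measure (ℕ → V)}
  {f : List V → List V} {b : ℕ}

lemma measure_Cyl_eq_zero_of_not_isPos [MeasurableSingletonClass V] (hP : IsReasonable E v₀ w P)
    {π : List V} (hπ : π ≠ []) (h : ¬ IsPos E v₀ π) : P (Cyl π) = 0 := by
  have := hP.1
  obtain ⟨u, t, rfl⟩ := List.exists_cons_of_ne_nil hπ
  by_cases hu : u = v₀
  · subst hu
    rw [hP.2 _ rfl]
    exact pathP_eq_zero_of_not_chain fun hc => h ⟨rfl, hc⟩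
  · have hstart : P (Cyl [v₀])ᶜ = 0 :=
      (prob_compl_eq_zero_iff (measurableSet_Cyl _)).2 (by simp [hP.2 [v₀] rfl, pathP])
    refine measure_mono_null (t := (Cyl [v₀])ᶜ) (fun ρ hρ hρ₀ => hu ?_) hstart
    simpa using (mem_Cyl_iff.1 (Cyl_append_subset [u] t hρ) 0 (by simp)).symm.trans
      (mem_Cyl_iff.1 hρ₀ 0 (by simp))

lemma measure_Cyl_append (hP : IsReasonable E v₀ w P) {π : List V} (hπ : IsPos E v₀ π)
    (hne : π ≠ []) (τ : List V) :
    P (Cyl (π ++ τ)) = P (Cyl π) * pathP E w (π.getLast hne :: τ) := by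
  rw [hP.2 _ hπ.1, hP.2 _ (by rw [List.head?_append, hπ.1]; rfl), pathP_append π hne]

lemma measure_Cyl_inter_compl_followsAt_le [MeasurableSingletonClass V]
    (hP : IsReasonable E v₀ w P) (hf : IsStrategy E v₀ f) (hb : BoundedBy E v₀ b f)
    {q : ℝ≥0∞} (hq1 : q ≤ 1) (hq : ∀ u v, E u v → q ≤ transP E w u v)
    {π : List V} (hne : π ≠ []) :
    P (Cyl π ∩ (FollowsAt E v₀ f π.length)ᶜ) ≤ (1 - q ^ b) * P (Cyl π) := by
  have := hP.1
  by_cases hπ : IsPos E v₀ π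
  swap
  · have hnull := measure_Cyl_eq_zero_of_not_isPos hP hne hπ
    rw [hnull, mul_zero]
    exact (measure_mono_null Set.inter_subset_left hnull).le
  have hdiff : Cyl π ∩ (FollowsAt E v₀ f π.length)ᶜ = Cyl π \ Cyl (π ++ f π) := by
    ext ρ
    simp only [Set.mem_inter_iff, Set.mem_compl_iff, Set.mem_sdiff, FollowsAt, Set.mem_ofPred_eq]
    constructor <;> rintro ⟨hρ, hfail⟩ <;> refine ⟨hρ, fun h => hfail ?_⟩ <;>
      simp_all [Cyl, List.length_append]
  have hmove : q ^ b * P (Cyl π) ≤ P (Cyl (π ++ f π)) := by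
    obtain ⟨_, hchain⟩ := hf π hπ
    have hsuffix : (π.getLast hne :: f π) <:+ π ++ f π :=
      ⟨π.dropLast, by rw [← List.singleton_append, ← List.append_assoc,
        List.dropLast_append_getLast]⟩
    rw [measure_Cyl_append hP hπ hne, mul_comm]
    exact mul_le_mul' le_rfl ((pow_le_pow_of_le_one zero_le hq1 (hb π hπ)).trans
      (pow_length_le_pathP hq (hchain.suffix hsuffix)))
  rw [hdiff, measure_sdiff (Cyl_append_subset π (f π)) (measurableSet_Cyl _).nullMeasurableSet
    (measure_ne_top P _), ENNReal.sub_mul fun _ _ => measure_ne_top P _, one_mul]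
  exact tsub_le_tsub_left hmove _

theorem measure_eventually_not_followsAt [MeasurableSingletonClass V]
    (hP : IsReasonable E v₀ w P) (hw : ∀ u v, E u v → 0 < w u v) (hf : IsStrategy E v₀ f)
    (hb : BoundedBy E v₀ b f) :
    P {ρ | ∀ᶠ m in atTop, ρ ∉ FollowsAt E v₀ f m} = 0 := by
  have := hP.1
  obtain ⟨q, hq0, hq1, hq⟩ := exists_pos_forall_le_transP hw
  have hsub : {ρ | ∀ᶠ m in atTop, ρ ∉ FollowsAt E v₀ f m} ⊆
      ⋃ N, ⋂ k, (FollowsAt E v₀ f (N + 1 + k * (b + 1)))ᶜ := fun ρ hρ => by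
    obtain ⟨N, hN⟩ := eventually_atTop.1 hρ
    exact Set.mem_iUnion.2 ⟨N, Set.mem_iInter.2 fun k => hN _ (by omega)⟩
  refine measure_mono_null hsub (measure_iUnion_null fun N => ?_)
  refine measure_iInter_eq_zero_of_forall_Cyl P (n := fun k => N + 1 + k * (b + 1)) ?_
    (ENNReal.sub_lt_self ENNReal.one_ne_top one_ne_zero (ENNReal.pow_pos hq0 b).ne') ?_
  · intro j k hjk ρ ρ' h
    refine congrArg Not (dependsOn_followsAt hb _ fun i hi => h i ?_)
    have : (j + 1) * (b + 1) ≤ k * (b + 1) := Nat.mul_le_mul_right _ hjk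
    simp only [Set.mem_Iio] at hi ⊢
    nlinarith
  · rintro k π hπ
    rw [← hπ]
    exact measure_Cyl_inter_compl_followsAt_le hP hf hb hq1 hq
      (List.ne_nil_of_length_pos (by omega))

end Reasonable

end BMGame

theorem stmt10_general {V : Type*} [Fintype V] [MeasurableSpace V] [DiscreteMeasurableSpace V]
    (E : V → V → Prop) (v₀ : V) (W : Set (ℕ → V))
    (w : V → V → ℝ≥0) (hw : ∀ u v, E u v → 0 < w u v)
    (P : MeasureTheory.Measure (ℕ → V)) (hP : IsReasonable E v₀ w P) :
    (∀ (f : List V → List V) (b : ℕ), IsStrategy E v₀ f → BoundedBy E v₀ b f →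
      P {ρ | IsPlay E v₀ ρ ∧ ConsGen f ρ}ᶜ = 0) ∧
    ((∃ (f : List V → List V) (b : ℕ), WinningStrategy E v₀ W f ∧ BoundedBy E v₀ b f) →
      P Wᶜ = 0) := by
  have consistent_ae : ∀ (f : List V → List V) (b : ℕ), IsStrategy E v₀ f →
      BoundedBy E v₀ b f → P {ρ | IsPlay E v₀ ρ ∧ ConsGen f ρ}ᶜ = 0 := by
    intro f b hf hb
    refine measure_mono_null (fun ρ hρ => ?_) (measure_eventually_not_followsAt hP hw hf hb)
    rw [Set.mem_ofPred_eq, ← not_frequently]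
    exact fun hfreq => hρ ⟨isPlay_of_frequently_followsAt hfreq,
      consGen_of_frequently_followsAt hfreq⟩
  refine ⟨consistent_ae, ?_⟩
  rintro ⟨f, b, ⟨hf, hwin⟩, hb⟩
  exact measure_mono_null (Set.compl_subset_compl.2 fun ρ hρ => hwin ρ hρ.1 hρ.2)
    (consistent_ae f b hf hb)

/-- For a reasonable probability measure `P`: the set of plays consistent with a bounded
strategy of Player 0 has `P`-measure `1`; consequently, if Player 0 has a bounded winning
strategy for `(G, v₀, W)`, then `P (W) = 1`. -/
theorem stmt10 {V : Type*} [Fintype V] [MeasurableSpace V] [DiscreteMeasurableSpace V]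
    (E : V → V → Prop) (hE : ∀ v, ∃ u, E v u) (v₀ : V)
    (W : Set (ℕ → V)) (hW : W ⊆ {ρ | IsPlay E v₀ ρ})
    (w : V → V → ℝ≥0) (hw : ∀ u v, E u v → 0 < w u v)
    (P : MeasureTheory.Measure (ℕ → V)) (hP : IsReasonable E v₀ w P) :
    (∀ (f : List V → List V) (b : ℕ), IsStrategy E v₀ f → BoundedBy E v₀ b f →
      P {ρ | IsPlay E v₀ ρ ∧ ConsGen f ρ}ᶜ = 0) ∧
    ((∃ (f : List V → List V) (b : ℕ), WinningStrategy E v₀ W f ∧ BoundedBy E v₀ b f) →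
      P Wᶜ = 0) :=
  stmt10_general E v₀ W w hw P hP
end

section
/- Let (G,v₀,W) be a Banach–Mazur game on a finite graph. Player 0 has a bounded move-counting winning strategy for (G,v₀,W) if and only if Player 0 has a positional winning strategy for (G,v₀,W). -/
open MeasureTheory
open scoped ENNReal NNReal

open BMGame

/-! A bounded move-counting strategy `h` uses only finitely many one-move strategies
`v ↦ h v n`, since there are finitely many maps from the finite vertex set to paths of bounded
length. The positional strategy `playAll` plays all of them in succession from the current
vertex. Along a play consistent with it every one-move strategy therefore occurs arbitrarily
late, right after the vertex it is applied to, so the moves of player 1 can be regrouped into a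
play consistent with `h`. Conversely, a positional strategy is a bounded move-counting strategy
that ignores the move counter. -/

namespace BMGame

variable {V : Type*} {E : V → V → Prop} {ρ : ℕ → V}

def OccursAt (ρ : ℕ → V) (a : ℕ) (l : List V) : Prop :=
  (List.range l.length).map (fun j => ρ (a + j)) = l

theorem pref_add_length_eq_append_iff {a : ℕ} {l : List V} :
    pref ρ (a + l.length) = pref ρ a ++ l ↔ OccursAt ρ a l := by
  rw [pref, pref, List.range_add, List.map_append, List.map_map, List.append_right_inj]
  rfl

theorem OccursAt.append {a : ℕ} {l₁ l₂ : List V} (h : OccursAt ρ a (l₁ ++ l₂)) :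
    OccursAt ρ a l₁ ∧ OccursAt ρ (a + l₁.length) l₂ := by
  rw [OccursAt, List.length_append, List.range_add, List.map_append, List.map_map] at h
  obtain ⟨h₁, h₂⟩ := List.append_inj h (by simp)
  refine ⟨h₁, ?_⟩
  simpa [OccursAt, Function.comp_def, Nat.add_assoc] using h₂

theorem OccursAt.getLast?_getD {a : ℕ} {l : List V} {v : V} (h : OccursAt ρ a l)
    (hv : ρ (a - 1) = v) : ρ (a + l.length - 1) = l.getLast?.getD v := by
  rcases l.eq_nil_or_concat with rfl | ⟨l', x, rfl⟩
  · simpa using hv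
  · simpa [List.range_succ] using congrArg List.getLast? h

theorem consMoveCounting_of_forall_exists_occursAt {h : V → ℕ → List V}
    (H : ∀ M n, ∃ d, M < d ∧ OccursAt ρ d (h (ρ (d - 1)) (n + 1))) : ConsMoveCounting h ρ := by
  choose D hD_gt hD_occ using H
  let c : ℕ → ℕ := fun i =>
    Nat.rec (D 0 0) (fun i d => D (d + (h (ρ (d - 1)) (i + 1)).length) (i + 1)) i
  refine ⟨c, hD_gt 0 0, fun i => ⟨pref_add_length_eq_append_iff.mpr ?_, hD_gt _ _⟩⟩
  cases i with
  | zero => exact hD_occ 0 0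
  | succ i => exact hD_occ _ (i + 1)

def playAll : List (V → List V) → V → List V
  | [], _ => []
  | q :: L, v => q v ++ playAll L ((q v).getLast?.getD v)

theorem isChain_cons_playAll :
    ∀ {L : List (V → List V)}, (∀ q ∈ L, IsPositional E q) → ∀ v, (v :: playAll L v).IsChain E
  | [], _, v => List.isChain_singleton v
  | q :: L, hL, v => by
    have hq : (v :: q v).IsChain E := (hL q List.mem_cons_self v).2
    have hrest := isChain_cons_playAll (fun q' hq' => hL q' (List.mem_cons_of_mem _ hq'))
      ((q v).getLast?.getD v)
    rw [playAll, ← List.cons_append]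
    refine hq.append (List.isChain_cons.mp hrest).2 fun x hx y hy => ?_
    rw [List.getLast?_cons, Option.mem_some_iff] at hx
    exact hx ▸ (List.isChain_cons.mp hrest).1 y hy

theorem isPositional_playAll {L : List (V → List V)}
    (hL : ∀ q ∈ L, IsPositional E q) (hne : L ≠ []) : IsPositional E (playAll L) := by
  refine fun v => ⟨?_, isChain_cons_playAll hL v⟩
  obtain ⟨q, L, rfl⟩ := List.exists_cons_of_ne_nil hne
  simp [playAll, (hL q List.mem_cons_self v).1]

theorem OccursAt.exists_occursAt_of_playAll :
    ∀ {L : List (V → List V)} {a : ℕ} {v : V}, OccursAt ρ a (playAll L v) → ρ (a - 1) = v →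
      ∀ q ∈ L, ∃ d, a ≤ d ∧ OccursAt ρ d (q (ρ (d - 1)))
  | [], _, _, _, _, q, hq => absurd hq List.not_mem_nil
  | q' :: L, a, v, h, hv, q, hq => by
    obtain ⟨hfirst, hrest⟩ := OccursAt.append h
    rcases List.mem_cons.mp hq with rfl | hq
    · exact ⟨a, le_rfl, hv ▸ hfirst⟩
    · obtain ⟨d, had, hd⟩ := hrest.exists_occursAt_of_playAll (hfirst.getLast?_getD hv) q hq
      exact ⟨d, by omega, hd⟩

theorem ConsPositional.exists_occursAt {L : List (V → List V)}
    (hρ : ConsPositional (playAll L) ρ) (M : ℕ) {q : V → List V} (hq : q ∈ L) :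
    ∃ d, M < d ∧ OccursAt ρ d (q (ρ (d - 1))) := by
  obtain ⟨c, -, hc⟩ := hρ
  have hc_mono : StrictMono c := strictMono_nat_of_lt_succ fun i => by have := (hc i).2; omega
  have hM : M < c (M + 1) := (hc_mono.id_le (M + 1) : M + 1 ≤ c (M + 1))
  obtain ⟨d, hd, hocc⟩ :=
    (pref_add_length_eq_append_iff.mp (hc (M + 1)).1).exists_occursAt_of_playAll rfl q hq
  exact ⟨d, by omega, hocc⟩

theorem finite_setOf_forall_length_le [Finite V] (b : ℕ) :
    {q : V → List V | ∀ v, (q v).length ≤ b}.Finite := by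
  simpa [Set.pi] using Set.Finite.pi (t := fun _ : V => {l : List V | l.length ≤ b})
    fun _ => List.finite_length_le V b

theorem exists_positionalWinning_of_moveCountingWinning [Finite V] {v₀ : V}
    {W : Set (ℕ → V)} {h : V → ℕ → List V} {b : ℕ} (hwin : MoveCountingWinning E v₀ W h)
    (hb : ∀ v n, 1 ≤ n → (h v n).length ≤ b) : ∃ f, PositionalWinning E v₀ W f := by
  have hfin : (Set.range fun n v => h v (n + 1)).Finite :=
    (finite_setOf_forall_length_le b).subset <| by
      rintro _ ⟨n, rfl⟩ v
      exact hb v (n + 1) n.succ_pos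
  let L := hfin.toFinset.toList
  have hmem : ∀ n, (fun v => h v (n + 1)) ∈ L := fun n => by simp [L]
  have hL : ∀ q ∈ L, IsPositional E q := by
    intro q hq
    obtain ⟨n, rfl⟩ : q ∈ Set.range fun n v => h v (n + 1) := by simpa [L] using hq
    exact fun v => hwin.1 v (n + 1) n.succ_pos
  refine ⟨playAll L, isPositional_playAll hL (List.ne_nil_of_mem (hmem 0)), fun ρ hρ hcons => ?_⟩
  exact hwin.2 ρ hρ <| consMoveCounting_of_forall_exists_occursAt fun M n =>
    hcons.exists_occursAt M (hmem n)

theorem PositionalWinning.moveCountingWinning {v₀ : V} {W : Set (ℕ → V)}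
    {f : V → List V} (hf : PositionalWinning E v₀ W f) :
    MoveCountingWinning E v₀ W fun v _ => f v :=
  ⟨fun v _ _ => hf.1 v, hf.2⟩

end BMGame

theorem stmt16_general {V : Type*} [Fintype V] (E : V → V → Prop)
    (v₀ : V) (W : Set (ℕ → V)) :
    (∃ (h : V → ℕ → List V) (b : ℕ), 1 ≤ b ∧ MoveCountingWinning E v₀ W h ∧
        ∀ v n, 1 ≤ n → (h v n).length ≤ b) ↔
      ∃ f : V → List V, PositionalWinning E v₀ W f := by
  constructor
  · rintro ⟨h, b, -, hwin, hb⟩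
    exact exists_positionalWinning_of_moveCountingWinning hwin hb
  · rintro ⟨f, hf⟩
    exact ⟨fun v _ => f v, Finset.univ.sup (fun v => (f v).length) + 1, by omega,
      hf.moveCountingWinning, fun v _ _ =>
        Nat.le_succ_of_le (Finset.le_sup (f := fun v => (f v).length) (Finset.mem_univ v))⟩

/-- Player 0 has a bounded move-counting winning strategy for a Banach–Mazur game
`(G, v₀, W)` on a finite graph if and only if Player 0 has a positional winning
strategy for it. -/
theorem stmt16 {V : Type*} [Fintype V] (E : V → V → Prop) (hE : ∀ v, ∃ u, E v u)
    (v₀ : V) (W : Set (ℕ → V)) (hW : W ⊆ {ρ | IsPlay E v₀ ρ}) :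
    (∃ (h : V → ℕ → List V) (b : ℕ), 1 ≤ b ∧ MoveCountingWinning E v₀ W h ∧
        ∀ v n, 1 ≤ n → (h v n).length ≤ b) ↔
      ∃ f : V → List V, PositionalWinning E v₀ W f :=
  stmt16_general E v₀ W
end
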